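/- arXiv:math/0602544 — 2 statements merged into one kernel-verified Lean document; each statement's English description precedes it below -/
import Mathlib

section
/- If M is π-symmetric and M →_FP N, then |M| =_βη |N| and N is π-symmetric. -/
/-- Untyped lambda terms with pairing and projections, de Bruijn representation
(so terms are automatically identified up to alpha-equivalence). -/
inductive Tm : Type
  | var : Nat → Tm
  | app : Tm → Tm → Tm
  | lam : Tm → Tm
  | pair : Tm → Tm → Tm
  | p1 : Tm → Tm
  | p2 : Tm → Tm

/-- Shift free de Bruijn indices ≥ d up by one. -/
def Tm.lift (d : Nat) : Tm → Tm
  | .var n => if n < d then .var n else .var (n + 1)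
  | .app a b => .app (a.lift d) (b.lift d)
  | .lam a => .lam (a.lift (d + 1))
  | .pair a b => .pair (a.lift d) (b.lift d)
  | .p1 a => .p1 (a.lift d)
  | .p2 a => .p2 (a.lift d)

/-- Capture-avoiding substitution of s for variable k. -/
def Tm.subst : Tm → Nat → Tm → Tm
  | .var n, k, s => if n = k then s else if n < k then .var n else .var (n - 1)
  | .app a b, k, s => .app (a.subst k s) (b.subst k s)
  | .lam a, k, s => .lam (a.subst (k + 1) (s.lift 0))
  | .pair a b, k, s => .pair (a.subst k s) (b.subst k s)
  | .p1 a, k, s => .p1 (a.subst k s)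
  | .p2 a, k, s => .p2 (a.subst k s)

/-- One-step FP-reduction: compatible closure of (β), (η̄), (π₁), (π₂), (S̄P), (δπ), (π₁λ), (π₂λ). -/
inductive StepFP : Tm → Tm → Prop
  | beta {M N} : StepFP (.app (.lam M) N) (M.subst 0 N)
  | eta {M} : StepFP M (.lam (.app (M.lift 0) (.var 0)))
  | pi1 {M N} : StepFP (.p1 (.pair M N)) M
  | pi2 {M N} : StepFP (.p2 (.pair M N)) N
  | sp {M} : StepFP M (.pair (.p1 M) (.p2 M))
  | dpi {M N P} : StepFP (.app (.pair M N) P) (.pair (.app M P) (.app N P))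
  | pi1lam {M} : StepFP (.p1 (.lam M)) (.lam (.p1 M))
  | pi2lam {M} : StepFP (.p2 (.lam M)) (.lam (.p2 M))
  | lam {M M'} : StepFP M M' → StepFP (.lam M) (.lam M')
  | appL {M M' N} : StepFP M M' → StepFP (.app M N) (.app M' N)
  | appR {M N N'} : StepFP N N' → StepFP (.app M N) (.app M N')
  | pairL {M M' N} : StepFP M M' → StepFP (.pair M N) (.pair M' N)
  | pairR {M N N'} : StepFP N N' → StepFP (.pair M N) (.pair M N')
  | p1 {M M'} : StepFP M M' → StepFP (.p1 M) (.p1 M')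
  | p2 {M M'} : StepFP M M' → StepFP (.p2 M) (.p2 M')

/-- Pure lambda terms (no pairing or projections), de Bruijn representation. -/
inductive PTm : Type
  | var : Nat → PTm
  | app : PTm → PTm → PTm
  | lam : PTm → PTm

def PTm.lift (d : Nat) : PTm → PTm
  | .var n => if n < d then .var n else .var (n + 1)
  | .app a b => .app (a.lift d) (b.lift d)
  | .lam a => .lam (a.lift (d + 1))

def PTm.subst : PTm → Nat → PTm → PTm
  | .var n, k, s => if n = k then s else if n < k then .var n else .var (n - 1)
  | .app a b, k, s => .app (a.subst k s) (b.subst k s)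
  | .lam a, k, s => .lam (a.subst (k + 1) (s.lift 0))

/-- βη-equivalence of pure lambda terms: the smallest congruence containing (β) and (η). -/
inductive BetaEta : PTm → PTm → Prop
  | beta {M N} : BetaEta (.app (.lam M) N) (M.subst 0 N)
  | eta {M} : BetaEta (.lam (.app (M.lift 0) (.var 0))) M
  | refl {M} : BetaEta M M
  | symm {M N} : BetaEta M N → BetaEta N M
  | trans {M N P} : BetaEta M N → BetaEta N P → BetaEta M P
  | app {M M' N N'} : BetaEta M M' → BetaEta N N' → BetaEta (.app M N) (.app M' N')
  | lam {M M'} : BetaEta M M' → BetaEta (.lam M) (.lam M')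

/-- π-erasure of a term. -/
def Tm.erase : Tm → PTm
  | .var n => .var n
  | .app a b => .app a.erase b.erase
  | .lam a => .lam a.erase
  | .pair a _ => a.erase
  | .p1 a => a.erase
  | .p2 a => a.erase

/-- A term is π-symmetric if the π-erasures of the two components of every pair
subterm are βη-equivalent. -/
def Tm.PiSym : Tm → Prop
  | .var _ => True
  | .app a b => a.PiSym ∧ b.PiSym
  | .lam a => a.PiSym
  | .pair a b => a.PiSym ∧ b.PiSym ∧ BetaEta a.erase b.erase
  | .p1 a => a.PiSym
  | .p2 a => a.PiSym

set_option linter.unreachableTactic false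
set_option linter.unusedTactic false

theorem PTm.lift_lift (M : PTm) : ∀ (i j : Nat), i ≤ j →
    (M.lift i).lift (j+1) = (M.lift j).lift i := by
  induction M with
  | var n =>
    intro i j h
    simp only [PTm.lift]
    split_ifs <;> simp only [PTm.lift] <;> split_ifs <;>
      first | rfl | omega | exact congrArg PTm.var (by omega)
  | app a b iha ihb => intro i j h; simp [PTm.lift, iha _ _ h, ihb _ _ h]
  | lam a iha => intro i j h; simp [PTm.lift, iha (i+1) (j+1) (by omega)]

theorem PTm.subst_lift (M : PTm) : ∀ (s : PTm) (d k : Nat), d ≤ k →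
    (M.subst k s).lift d = (M.lift d).subst (k+1) (s.lift d) := by
  induction M with
  | var n =>
    intro s d k h
    simp only [PTm.lift, PTm.subst]
    split_ifs <;> simp only [PTm.lift, PTm.subst] <;> split_ifs <;>
      first | rfl | omega | exact congrArg PTm.var (by omega)
  | app a b iha ihb => intro s d k h; simp [PTm.lift, PTm.subst, iha _ _ _ h, ihb _ _ _ h]
  | lam a iha =>
    intro s d k h
    simp only [PTm.lift, PTm.subst, iha (s.lift 0) (d+1) (k+1) (by omega),
      PTm.lift_lift s 0 d (by omega)]

theorem PTm.lift_subst (M : PTm) : ∀ (s : PTm) (d k : Nat), k ≤ d →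
    (M.subst k s).lift d = (M.lift (d+1)).subst k (s.lift d) := by
  induction M with
  | var n =>
    intro s d k h
    simp only [PTm.lift, PTm.subst]
    split_ifs <;> simp only [PTm.lift, PTm.subst] <;> split_ifs <;>
      first | rfl | omega | exact congrArg PTm.var (by omega)
  | app a b iha ihb => intro s d k h; simp [PTm.lift, PTm.subst, iha _ _ _ h, ihb _ _ _ h]
  | lam a iha =>
    intro s d k h
    simp only [PTm.lift, PTm.subst, iha (s.lift 0) (d+1) (k+1) (by omega),
      PTm.lift_lift s 0 d (by omega)]

theorem PTm.lift_subst_cancel (M : PTm) : ∀ (s : PTm) (d : Nat),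
    (M.lift d).subst d s = M := by
  induction M with
  | var n =>
    intro s d
    simp only [PTm.lift, PTm.subst]
    split_ifs <;> simp only [PTm.subst] <;> split_ifs <;>
      first | rfl | omega | exact congrArg PTm.var (by omega)
  | app a b iha ihb => intro s d; simp [PTm.lift, PTm.subst, iha, ihb]
  | lam a iha => intro s d; simp [PTm.lift, PTm.subst, iha]

theorem PTm.subst_subst (M : PTm) : ∀ (N S : PTm) (j k : Nat), j ≤ k →
    (M.subst j N).subst k S = (M.subst (k+1) (S.lift j)).subst j (N.subst k S) := by
  induction M with
  | var n =>
    intro N S j k h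
    simp only [PTm.subst]
    split_ifs <;> (try simp only [PTm.subst]) <;> (try split_ifs) <;>
      first
      | rfl
      | omega
      | exact congrArg PTm.var (by omega)
      | exact (PTm.lift_subst_cancel S _ j).symm
  | app a b iha ihb => intro N S j k h; simp [PTm.subst, iha _ _ _ _ h, ihb _ _ _ _ h]
  | lam a iha =>
    intro N S j k h
    simp only [PTm.subst, iha (N.lift 0) (S.lift 0) (j+1) (k+1) (by omega),
      PTm.lift_lift S 0 j (by omega), PTm.subst_lift N S 0 k (by omega)]

theorem BetaEta.liftc {A B : PTm} (h : BetaEta A B) : ∀ d, BetaEta (A.lift d) (B.lift d) := by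
  induction h with
  | @beta M N =>
    intro d
    have : (M.subst 0 N).lift d = (M.lift (d+1)).subst 0 (N.lift d) :=
      PTm.lift_subst M N d 0 (by omega)
    simp only [PTm.lift, this]
    exact BetaEta.beta
  | @eta M =>
    intro d
    have h1 : (M.lift 0).lift (d+1) = (M.lift d).lift 0 := PTm.lift_lift M 0 d (by omega)
    simp only [PTm.lift, if_pos (Nat.zero_lt_succ d), h1]
    exact BetaEta.eta
  | refl => intro d; exact BetaEta.refl
  | symm _ ih => intro d; exact (ih d).symm
  | trans _ _ ih1 ih2 => intro d; exact (ih1 d).trans (ih2 d)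
  | app _ _ ih1 ih2 => intro d; exact BetaEta.app (ih1 d) (ih2 d)
  | lam _ ih => intro d; exact BetaEta.lam (ih (d+1))

theorem BetaEta.substc {A B : PTm} (h : BetaEta A B) :
    ∀ (k : Nat) (s : PTm), BetaEta (A.subst k s) (B.subst k s) := by
  induction h with
  | @beta M N =>
    intro k s
    have : (M.subst 0 N).subst k s
        = (M.subst (k+1) (s.lift 0)).subst 0 (N.subst k s) :=
      PTm.subst_subst M N s 0 k (by omega)
    simp only [PTm.subst, this]
    exact BetaEta.beta
  | @eta M =>
    intro k s
    have h1 : (M.lift 0).subst (k+1) (s.lift 0) = (M.subst k s).lift 0 :=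
      (PTm.subst_lift M s 0 k (by omega)).symm
    simp only [PTm.subst, h1]
    rw [if_neg (by omega : ¬ (0 : Nat) = k + 1), if_pos (Nat.zero_lt_succ k)]
    exact BetaEta.eta
  | refl => intro k s; exact BetaEta.refl
  | symm _ ih => intro k s; exact (ih k s).symm
  | trans _ _ ih1 ih2 => intro k s; exact (ih1 k s).trans (ih2 k s)
  | app _ _ ih1 ih2 => intro k s; exact BetaEta.app (ih1 k s) (ih2 k s)
  | lam _ ih => intro k s; exact BetaEta.lam (ih (k+1) (s.lift 0))

theorem Tm.erase_lift (M : Tm) : ∀ d, (M.lift d).erase = M.erase.lift d := by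
  induction M <;> intro d <;> simp_all [Tm.lift, Tm.erase, PTm.lift]
  case var n => split_ifs <;> simp [Tm.erase]

theorem Tm.erase_subst (M : Tm) : ∀ (k : Nat) (s : Tm),
    (M.subst k s).erase = M.erase.subst k s.erase := by
  induction M <;> intro k s <;>
    simp_all [Tm.subst, Tm.erase, PTm.subst, Tm.erase_lift]
  case var n => split_ifs <;> simp [Tm.erase]

theorem Tm.PiSym.liftc {M : Tm} (h : M.PiSym) : ∀ d, (M.lift d).PiSym := by
  induction M with
  | var n => intro d; simp only [Tm.lift]; split_ifs <;> trivial
  | app a b iha ihb => exact fun d => ⟨iha h.1 d, ihb h.2 d⟩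
  | lam a iha => exact fun d => iha h (d+1)
  | pair a b iha ihb =>
    intro d
    refine ⟨iha h.1 d, ihb h.2.1 d, ?_⟩
    rw [Tm.erase_lift, Tm.erase_lift]
    exact h.2.2.liftc d
  | p1 a iha => exact fun d => iha h d
  | p2 a iha => exact fun d => iha h d

theorem Tm.PiSym.substc {M : Tm} (h : M.PiSym) : ∀ (k : Nat) (s : Tm), s.PiSym →
    (M.subst k s).PiSym := by
  induction M with
  | var n =>
    intro k s hs; simp only [Tm.subst]; split_ifs <;> trivial
  | app a b iha ihb => exact fun k s hs => ⟨iha h.1 k s hs, ihb h.2 k s hs⟩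
  | lam a iha => exact fun k s hs => iha h (k+1) (s.lift 0) (hs.liftc 0)
  | pair a b iha ihb =>
    intro k s hs
    refine ⟨iha h.1 k s hs, ihb h.2.1 k s hs, ?_⟩
    rw [Tm.erase_subst, Tm.erase_subst]
    exact h.2.2.substc k s.erase
  | p1 a iha => exact fun k s hs => iha h k s hs
  | p2 a iha => exact fun k s hs => iha h k s hs


/-- FP-reduction preserves π-symmetry and the βη-class of the π-erasure. -/
theorem piSym_stepFP (M N : Tm) (hM : M.PiSym) (h : StepFP M N) :
    BetaEta M.erase N.erase ∧ N.PiSym := by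
  induction h with
  | @beta M N =>
    refine ⟨?_, Tm.PiSym.substc (M := M) hM.1 0 N hM.2⟩
    rw [Tm.erase_subst]
    exact BetaEta.beta
  | @eta M =>
    refine ⟨?_, hM.liftc 0, trivial⟩
    simp only [Tm.erase, Tm.erase_lift]
    exact BetaEta.eta.symm
  | pi1 => exact ⟨BetaEta.refl, hM.1⟩
  | pi2 => exact ⟨hM.2.2, hM.2.1⟩
  | sp => exact ⟨BetaEta.refl, hM, hM, BetaEta.refl⟩
  | dpi =>
    exact ⟨BetaEta.refl, ⟨hM.1.1, hM.2⟩, ⟨hM.1.2.1, hM.2⟩,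
      BetaEta.app hM.1.2.2 BetaEta.refl⟩
  | pi1lam => exact ⟨BetaEta.refl, hM⟩
  | pi2lam => exact ⟨BetaEta.refl, hM⟩
  | lam _ ih =>
    obtain ⟨h1, h2⟩ := ih hM
    exact ⟨BetaEta.lam h1, h2⟩
  | appL _ ih =>
    obtain ⟨h1, h2⟩ := ih hM.1
    exact ⟨BetaEta.app h1 BetaEta.refl, h2, hM.2⟩
  | appR _ ih =>
    obtain ⟨h1, h2⟩ := ih hM.2
    exact ⟨BetaEta.app BetaEta.refl h1, hM.1, h2⟩
  | pairL _ ih =>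
    obtain ⟨h1, h2⟩ := ih hM.1
    exact ⟨h1, h2, hM.2.1, h1.symm.trans hM.2.2⟩
  | pairR _ ih =>
    obtain ⟨h1, h2⟩ := ih hM.2.1
    exact ⟨BetaEta.refl, hM.1, h2, hM.2.2.trans h1⟩
  | p1 _ ih => exact ih hM
  | p2 _ ih => exact ih hM
end

section
/- The theory βη-SP, i.e., the extensional lambda calculus with surjective pairing, is consistent: there exist terms M and N with M ≠_βηSP N (for instance, two distinct variables). -/
/-- The theory βη-SP: the smallest congruence containing (β), (η), (π₁), (π₂), (SP). -/
inductive EqSP : Tm → Tm → Prop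
  | beta {M N} : EqSP (.app (.lam M) N) (M.subst 0 N)
  | eta {M} : EqSP (.lam (.app (M.lift 0) (.var 0))) M
  | pi1 {M N} : EqSP (.p1 (.pair M N)) M
  | pi2 {M N} : EqSP (.p2 (.pair M N)) N
  | sp {M} : EqSP (.pair (.p1 M) (.p2 M)) M
  | refl {M} : EqSP M M
  | symm {M N} : EqSP M N → EqSP N M
  | trans {M N P} : EqSP M N → EqSP N P → EqSP M P
  | app {M M' N N'} : EqSP M M' → EqSP N N' → EqSP (.app M N) (.app M' N')
  | lam {M M'} : EqSP M M' → EqSP (.lam M) (.lam M')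
  | pair {M M' N N'} : EqSP M M' → EqSP N N' → EqSP (.pair M N) (.pair M' N')
  | p1 {M M'} : EqSP M M' → EqSP (.p1 M) (.p1 M')
  | p2 {M M'} : EqSP M M' → EqSP (.p2 M) (.p2 M')

open Set

section ScottContinuous

variable {ι α β : Type*}

theorem OrderIso.scottContinuous [Preorder α] [Preorder β] (e : α ≃o β) : ScottContinuous e :=
  fun _ _ _ _ h => e.isLUB_image'.2 h

@[fun_prop]
theorem scottContinuous_apply {π : ι → Type*} [∀ i, Preorder (π i)] (i : ι) :
    ScottContinuous fun f : ∀ i, π i => f i :=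
  fun _ _ _ _ h => isLUB_pi.1 h i

@[fun_prop]
theorem scottContinuous_pi {π : ι → Type*} [∀ i, Preorder (π i)] [Preorder α]
    {f : α → ∀ i, π i} (h : ∀ i, ScottContinuous fun a => f a i) : ScottContinuous f := by
  intro d hd hdir a ha
  refine isLUB_pi.2 fun i => ?_
  rw [image_image]
  exact h i hd hdir ha

variable [CompleteLattice α] [CompleteLattice β]

theorem ScottContinuous.map_iSup₂ {f : α → β} (hf : ScottContinuous f) {s : Set ι}
    {g : ι → α} (hs : s.Nonempty) (hd : DirectedOn (· ≤ ·) (g '' s)) :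
    f (⨆ i ∈ s, g i) = ⨆ i ∈ s, f (g i) := by
  rw [← sSup_image, hf.map_sSup (hs.image g) hd, sSup_image, iSup_image]

theorem ScottContinuous.map_iSup_of_monotone {f : α → β} (hf : ScottContinuous f)
    {g : ℕ → α} (hg : Monotone g) : f (⨆ n, g n) = ⨆ n, f (g n) := by
  rw [iSup, hf.map_sSup (range_nonempty g) (directedOn_range.2 hg.directed_le), ← range_comp]
  rfl

theorem scottContinuous_iSup {F : ι → α → β} (hF : ∀ i, ScottContinuous (F i)) :
    ScottContinuous fun a => ⨆ i, F i a := by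
  refine .of_map_sSup fun d hd hdir => ?_
  simp only [(hF _).map_sSup hd hdir, sSup_image]
  exact iSup_comm.trans (iSup_congr fun _ => iSup_comm)

end ScottContinuous

structure ScottHom (α β : Type*) [Preorder α] [Preorder β] where
  toFun : α → β
  scottContinuous_toFun : ScottContinuous toFun

namespace ScottHom

variable {α β γ : Type*}

section Preorder

variable [Preorder α] [Preorder β] [Preorder γ]

instance : FunLike (ScottHom α β) α β where
  coe := toFun
  coe_injective f g h := by cases f; cases g; congr

@[fun_prop]
theorem scottContinuous (f : ScottHom α β) : ScottContinuous f := f.scottContinuous_toFun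

@[ext]
theorem ext {f g : ScottHom α β} (h : ∀ x, f x = g x) : f = g := DFunLike.ext f g h

@[simp]
theorem coe_mk (f : α → β) (hf : ScottContinuous f) : ⇑(⟨f, hf⟩ : ScottHom α β) = f :=
  rfl

end Preorder

variable [CompleteLattice α] [CompleteLattice β] [CompleteLattice γ]

instance : PartialOrder (ScottHom α β) := PartialOrder.lift _ DFunLike.coe_injective

theorem le_def {f g : ScottHom α β} : f ≤ g ↔ ∀ x, f x ≤ g x := Iff.rfl

instance : SupSet (ScottHom α β) where
  sSup S := ⟨fun x => ⨆ f ∈ S, f x, by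
    simpa only [iSup_subtype'] using scottContinuous_iSup fun f : S => f.1.scottContinuous⟩

@[simp]
theorem sSup_apply (S : Set (ScottHom α β)) (x : α) : sSup S x = ⨆ f ∈ S, f x := rfl

instance : CompleteLattice (ScottHom α β) :=
  completeLatticeOfSup _ fun _ =>
    ⟨fun _ hf => le_def.2 fun x => le_biSup (fun g : ScottHom α β => g x) hf,
     fun _ hg => le_def.2 fun x => iSup₂_le fun _ hf => le_def.1 (hg hf) x⟩

theorem iSup₂_apply {ι : Type*} (s : Set ι) (F : ι → ScottHom α β) (x : α) :
    (⨆ i ∈ s, F i) x = ⨆ i ∈ s, F i x := by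
  rw [← sSup_image, sSup_apply, iSup_image]

@[fun_prop]
theorem scottContinuous_eval (x : α) : ScottContinuous fun f : ScottHom α β => f x :=
  .of_map_sSup fun _ _ _ => by rw [sSup_apply, sSup_image]

@[fun_prop]
theorem _root_.ScottContinuous.scottHom_apply {F : γ → ScottHom α β} (hF : ScottContinuous F)
    (x : α) : ScottContinuous fun c => F c x :=
  hF.comp (scottContinuous_eval x)

theorem scottContinuous_of_apply {F : γ → ScottHom α β}
    (h : ∀ x, ScottContinuous fun c => F c x) : ScottContinuous F :=
  .of_map_sSup fun d hd hdir => by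
    ext x
    rw [(h x).map_sSup hd hdir, sSup_image, sSup_image, iSup₂_apply]

def curry (f : ScottHom (γ × α) β) : ScottHom γ (ScottHom α β) :=
  ⟨fun c => ⟨fun a => f (c, a), by fun_prop⟩,
    scottContinuous_of_apply fun a => by simp only [coe_mk]; fun_prop⟩

@[simp]
theorem curry_apply_apply (f : ScottHom (γ × α) β) (c : γ) (a : α) : curry f c a = f (c, a) :=
  rfl

end ScottHom

structure EmbProj (α β : Type*) [CompleteLattice α] [CompleteLattice β] where
  emb : α → β
  proj : β → α
  gc : GaloisConnection emb proj
  proj_emb : ∀ x, proj (emb x) = x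
  scottContinuous_proj : ScottContinuous proj

abbrev SeqHom (α : Type*) [CompleteLattice α] := ScottHom (ℕ → α) α

namespace EmbProj

variable {α β : Type*} [CompleteLattice α] [CompleteLattice β]

theorem scottContinuous_emb (h : EmbProj α β) : ScottContinuous h.emb :=
  .of_map_sSup fun _ _ _ => by rw [h.gc.l_sSup, sSup_image]

theorem emb_proj_le (h : EmbProj α β) (y : β) : h.emb (h.proj y) ≤ y := h.gc.l_u_le y

def const (α : Type*) [CompleteLattice α] : EmbProj α (SeqHom α) where
  emb a := ⟨fun _ => a, ScottContinuous.const a⟩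
  proj f := f ⊥
  gc _ f := ⟨fun h => h ⊥, fun h _ => h.trans (f.scottContinuous.monotone bot_le)⟩
  proj_emb _ := rfl
  scottContinuous_proj := ScottHom.scottContinuous_eval ⊥

def seqHom (h : EmbProj α β) : EmbProj (SeqHom α) (SeqHom β) where
  emb f := ⟨fun σ => h.emb (f (h.proj ∘ σ)), by
    have := h.scottContinuous_emb; have := h.scottContinuous_proj; fun_prop⟩
  proj g := ⟨fun σ => h.proj (g (h.emb ∘ σ)), by
    have := h.scottContinuous_emb; have := h.scottContinuous_proj; fun_prop⟩
  gc f g := by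
    refine ⟨fun hfg σ => ?_, fun hfg σ => ?_⟩
    · calc f σ = f (h.proj ∘ h.emb ∘ σ) := by simp only [Function.comp_def, h.proj_emb]
        _ ≤ h.proj (g (h.emb ∘ σ)) := h.gc.le_iff_le.1 (hfg _)
    · calc h.emb (f (h.proj ∘ σ)) ≤ g (h.emb ∘ h.proj ∘ σ) := h.gc.le_iff_le.2 (hfg _)
        _ ≤ g σ := g.scottContinuous.monotone fun k => h.emb_proj_le (σ k)
  proj_emb f := by ext σ; simp [Function.comp_def, h.proj_emb]
  scottContinuous_proj := ScottHom.scottContinuous_of_apply fun σ => by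
    have := h.scottContinuous_proj; simp only [ScottHom.coe_mk]; fun_prop

end EmbProj

section InvLimit

variable {L : ℕ → Type*} [∀ n, CompleteLattice (L n)]

def InvLimit (ep : ∀ n, EmbProj (L n) (L (n + 1))) : Type _ :=
  {d : ∀ n, L n // ∀ n, (ep n).proj (d (n + 1)) = d n}

namespace InvLimit

variable {ep : ∀ n, EmbProj (L n) (L (n + 1))}

instance : DFunLike (InvLimit ep) ℕ L where
  coe := Subtype.val
  coe_injective := Subtype.val_injective

@[ext]
theorem ext {d d' : InvLimit ep} (h : ∀ n, d n = d' n) : d = d' := DFunLike.ext d d' h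

@[simp]
theorem proj_apply_succ (d : InvLimit ep) (n : ℕ) : (ep n).proj (d (n + 1)) = d n := d.2 n

instance : PartialOrder (InvLimit ep) := Subtype.partialOrder _

theorem le_def {d d' : InvLimit ep} : d ≤ d' ↔ ∀ n, d n ≤ d' n := Iff.rfl

instance : InfSet (InvLimit ep) where
  sInf S := ⟨fun n => ⨅ d ∈ S, d n, fun n => by
    dsimp only
    rw [← sInf_image, (ep n).gc.u_sInf, iInf_image]
    simp only [proj_apply_succ]⟩

instance : CompleteLattice (InvLimit ep) :=
  completeLatticeOfInf _ fun _ =>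
    ⟨fun d hd => le_def.2 fun _ => iInf₂_le d hd,
     fun _ hd => le_def.2 fun n => le_iInf₂ fun _ hd' => le_def.1 (hd hd') n⟩

@[fun_prop]
theorem scottContinuous_apply (n : ℕ) : ScottContinuous fun d : InvLimit ep => d n := by
  refine .of_map_sSup fun S hS hdir => ?_
  have hsup : IsLUB S ⟨fun m => ⨆ d ∈ S, d m, fun m => by
      rw [(ep m).scottContinuous_proj.map_iSup₂ hS
        (hdir.mono_comp fun _ _ h => le_def.1 h (m + 1))]
      simp only [proj_apply_succ]⟩ :=
    ⟨fun d hd => le_def.2 fun m => le_biSup (fun d : InvLimit ep => d m) hd,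
     fun _ hd => le_def.2 fun m => iSup₂_le fun _ hd' => le_def.1 (hd hd') m⟩
  rw [hsup.sSup_eq, sSup_image]
  rfl

@[fun_prop]
theorem _root_.ScottContinuous.invLimit_apply {α : Type*} [CompleteLattice α]
    {F : α → InvLimit ep} (hF : ScottContinuous F) (n : ℕ) : ScottContinuous fun a => F a n :=
  hF.comp (scottContinuous_apply n)

theorem iSup_apply_of_monotone {F : ℕ → InvLimit ep} (hF : Monotone F) (n : ℕ) :
    (⨆ k, F k) n = ⨆ k, F k n :=
  (scottContinuous_apply n).map_iSup_of_monotone hF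

theorem apply_eq_of_apply_eq {d d' : InvLimit ep} {n m : ℕ} (hnm : n ≤ m) (h : d m = d' m) :
    d n = d' n := by
  induction m, hnm using Nat.le_induction with
  | base => exact h
  | succ m _ ih => exact ih (by rw [← proj_apply_succ d, h, proj_apply_succ])

variable (ep) in
def up {n m : ℕ} (h : n ≤ m) (x : L n) : L m :=
  Nat.leRec (motive := fun m _ => L m) x (fun k _ y => (ep k).emb y) h

@[simp]
theorem up_refl {n : ℕ} (x : L n) : up ep le_rfl x = x := Nat.leRec_self _ _

theorem up_succ {n m : ℕ} (h : n ≤ m) (x : L n) :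
    up ep (h.trans m.le_succ) x = (ep m).emb (up ep h x) :=
  Nat.leRec_succ _ _ h

variable (ep) in
def through (n : ℕ) (x : L n) (m : ℕ) : L m :=
  if h : n ≤ m then up ep h x else (ep m).proj (through n x (m + 1))
termination_by n - m

theorem through_succ (n : ℕ) (x : L n) (m : ℕ) :
    (ep m).proj (through ep n x (m + 1)) = through ep n x m := by
  conv_rhs => rw [through]
  split_ifs with h
  · rw [through, dif_pos (h.trans m.le_succ), up_succ h, (ep m).proj_emb]
  · rfl

theorem surjective_apply (n : ℕ) : Function.Surjective fun d : InvLimit ep => d n :=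
  fun x => ⟨⟨through ep n x, through_succ n x⟩, by
    change through ep n x n = x
    rw [through, dif_pos le_rfl, up_refl]⟩

variable (ep) in
def embed (n : ℕ) (x : L n) : InvLimit ep := sInf {d | x ≤ d n}

theorem gc_embed (n : ℕ) : GaloisConnection (embed ep n) fun d => d n :=
  fun x _ => ⟨fun h => (le_iInf₂ fun _ hd => hd : x ≤ embed ep n x n).trans (le_def.1 h n),
    fun h => sInf_le h⟩

theorem scottContinuous_embed (n : ℕ) : ScottContinuous (embed ep n) :=
  .of_map_sSup fun _ _ _ => by rw [(gc_embed n).l_sSup, sSup_image]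

@[simp]
theorem embed_apply_self (n : ℕ) (x : L n) : embed ep n x n = x := by
  obtain ⟨d, rfl⟩ := surjective_apply (ep := ep) n x
  exact le_antisymm (le_def.1 ((gc_embed n).l_u_le d) n) ((gc_embed n).le_u_l _)

theorem embed_apply_le (n : ℕ) (d : InvLimit ep) : embed ep n (d n) ≤ d := (gc_embed n).l_u_le d

theorem embed_succ_emb (n : ℕ) (x : L n) : embed ep (n + 1) ((ep n).emb x) = embed ep n x := by
  simp only [embed, (ep n).gc.le_iff_le, proj_apply_succ]

theorem embed_up {n m : ℕ} (h : n ≤ m) (x : L n) : embed ep m (up ep h x) = embed ep n x := by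
  induction m, h using Nat.le_induction with
  | base => rw [up_refl]
  | succ m h ih => rw [up_succ h, embed_succ_emb, ih]

theorem embed_apply_succ {n m : ℕ} (h : n ≤ m) (x : L n) :
    embed ep n x (m + 1) = (ep m).emb (embed ep n x m) := by
  have h' := embed_succ_emb (ep := ep) m (up ep h x)
  rw [← embed_up h, ← h', embed_apply_self, h', embed_apply_self]

theorem embed_succ_apply {n m : ℕ} (h : n ≤ m) (y : L (m + 1)) :
    embed ep (m + 1) y n = embed ep m ((ep m).proj y) n :=
  apply_eq_of_apply_eq h (by rw [← proj_apply_succ, embed_apply_self, embed_apply_self])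

theorem monotone_embed_apply (d : InvLimit ep) : Monotone fun n => embed ep n (d n) :=
  monotone_nat_of_le_succ fun n => by
    rw [← embed_succ_emb, ← proj_apply_succ d n]
    exact (gc_embed _).monotone_l ((ep n).emb_proj_le _)

theorem iSup_embed_apply (d : InvLimit ep) : ⨆ n, embed ep n (d n) = d :=
  le_antisymm (iSup_le fun n => embed_apply_le n d) <| le_def.2 fun n => by
    rw [iSup_apply_of_monotone (monotone_embed_apply d)]
    exact (embed_apply_self n (d n)).symm.trans_le (le_iSup (fun k => embed ep k (d k) n) n)

def ofSucc (d : ∀ n, L (n + 1)) (h : ∀ n, (ep (n + 1)).proj (d (n + 1)) = d n) : InvLimit ep :=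
  ⟨fun | 0 => (ep 0).proj (d 0) | n + 1 => d n, fun | 0 => rfl | n + 1 => h n⟩

theorem ext_succ {d d' : InvLimit ep} (h : ∀ n, d (n + 1) = d' (n + 1)) : d = d' :=
  ext fun n => apply_eq_of_apply_eq n.le_succ (h n)

instance [Nontrivial (L 0)] : Nontrivial (InvLimit ep) :=
  (surjective_apply 0).nontrivial

end InvLimit

end InvLimit

section InsertIdx

variable {α : Type*}

def eraseIdx (d : ℕ) (ρ : ℕ → α) : ℕ → α := fun k => ρ (if k < d then k else k + 1)

def insertIdx (k : ℕ) (a : α) (ρ : ℕ → α) : ℕ → α :=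
  fun j => if j < k then ρ j else if j = k then a else ρ (j - 1)

theorem eraseIdx_insertIdx_self (k : ℕ) (a : α) (ρ : ℕ → α) :
    eraseIdx k (insertIdx k a ρ) = ρ := by
  funext j
  simp only [eraseIdx, insertIdx]
  split_ifs <;> first | rfl | omega

theorem eraseIdx_succ_insertIdx_zero (d : ℕ) (a : α) (ρ : ℕ → α) :
    eraseIdx (d + 1) (insertIdx 0 a ρ) = insertIdx 0 a (eraseIdx d ρ) := by
  funext j
  simp only [eraseIdx, insertIdx]
  split_ifs <;> first | rfl | omega | contradiction | (congr 1; omega)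

theorem insertIdx_succ_insertIdx_zero (k : ℕ) (a b : α) (ρ : ℕ → α) :
    insertIdx (k + 1) a (insertIdx 0 b ρ) = insertIdx 0 b (insertIdx k a ρ) := by
  funext j
  simp only [insertIdx]
  split_ifs <;> first | rfl | omega

@[fun_prop]
theorem ScottContinuous.insertIdx {β : Type*} [Preorder α] [Preorder β] {f : β → α}
    {g : β → ℕ → α} (hf : ScottContinuous f) (hg : ScottContinuous g) (k : ℕ) :
    ScottContinuous fun b => insertIdx k (f b) (g b) :=
  scottContinuous_pi fun j => by unfold _root_.insertIdx; split_ifs <;> fun_prop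

end InsertIdx

namespace SPModel

open InvLimit

-- Reducible, so that instance search sees `level (n + 1)` as `SeqHom (level n)`.
@[reducible]
def level : ℕ → CompleteLat
  | 0 => .of Prop
  | n + 1 => .of (SeqHom (level n))

def levelEP : ∀ n, EmbProj (level n) (level (n + 1))
  | 0 => EmbProj.const _
  | n + 1 => (levelEP n).seqHom

abbrev Dinf : Type := InvLimit levelEP

theorem levelEP_succ_emb_apply {n : ℕ} (f : level (n + 1)) (σ : ℕ → level (n + 1)) :
    (levelEP (n + 1)).emb f σ = (levelEP n).emb (f fun k => (levelEP n).proj (σ k)) := rfl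

theorem levelEP_succ_proj_apply {n : ℕ} (g : level (n + 2)) (σ : ℕ → level n) :
    (levelEP (n + 1)).proj g σ = (levelEP n).proj (g fun k => (levelEP n).emb (σ k)) := rfl

def approx (d : Dinf) (ρ : ℕ → Dinf) (n : ℕ) : Dinf :=
  embed levelEP n (d (n + 1) fun k => ρ k n)

theorem monotone_approx (d : Dinf) (ρ : ℕ → Dinf) : Monotone (approx d ρ) := by
  refine monotone_nat_of_le_succ fun n => ?_
  rw [approx, ← embed_succ_emb]
  refine (gc_embed _).monotone_l ?_
  calc (levelEP n).emb (d (n + 1) fun k => ρ k n)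
      = (levelEP (n + 1)).emb (d (n + 1)) fun k => (levelEP n).emb (ρ k n) := by
        rw [levelEP_succ_emb_apply]; simp only [(levelEP n).proj_emb]
    _ ≤ d (n + 2) fun k => (levelEP n).emb (ρ k n) := by
        rw [← proj_apply_succ d (n + 1)]
        exact (levelEP (n + 1)).emb_proj_le _ _
    _ ≤ d (n + 2) fun k => ρ k (n + 1) := by
        refine (d (n + 2)).scottContinuous.monotone fun k => ?_
        rw [← proj_apply_succ (ρ k) n]
        exact (levelEP n).emb_proj_le _

def toSeqHom (d : Dinf) : SeqHom Dinf :=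
  ⟨fun ρ => ⨆ n, approx d ρ n, scottContinuous_iSup fun n => by
    have := scottContinuous_embed (ep := levelEP) n
    have := (d (n + 1)).scottContinuous
    unfold approx
    fun_prop⟩

theorem monotone_toSeqHom : Monotone toSeqHom := fun _ _ h _ =>
  iSup_mono fun n => (gc_embed n).monotone_l (le_def.1 h (n + 1) _)

theorem approx_embed_apply_of_le (d : Dinf) {n m : ℕ} (σ : ℕ → level n) (h : n ≤ m) :
    approx d (fun k => embed levelEP n (σ k)) m n = d (n + 1) σ := by
  induction m, h using Nat.le_induction with
  | base => simp [approx]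
  | succ m h ih =>
    rw [approx, embed_succ_apply h, ← ih, approx]
    congr 2
    simp only [embed_apply_succ h]
    rw [← levelEP_succ_proj_apply, proj_apply_succ]

theorem toSeqHom_embed_apply (d : Dinf) {n : ℕ} (σ : ℕ → level n) :
    toSeqHom d (fun k => embed levelEP n (σ k)) n = d (n + 1) σ := by
  have hmono := monotone_approx d fun k => embed levelEP n (σ k)
  change (⨆ m, approx d _ m) n = _
  rw [iSup_apply_of_monotone hmono]
  refine le_antisymm (iSup_le fun m => ?_) ?_
  · exact (le_def.1 (hmono (le_max_left m n)) n).trans_eq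
      (approx_embed_apply_of_le d σ (le_max_right m n))
  · exact (approx_embed_apply_of_le d σ le_rfl).symm.trans_le
      (le_iSup (fun m => approx d _ m n) n)

def ofSeqHomLevel (f : SeqHom Dinf) (n : ℕ) : level (n + 1) :=
  ⟨fun σ => f (fun k => embed levelEP n (σ k)) n, by
    have := scottContinuous_embed (ep := levelEP) n
    fun_prop⟩

def ofSeqHom (f : SeqHom Dinf) : Dinf :=
  ofSucc (ofSeqHomLevel f) fun n => ScottHom.ext fun σ => by
    rw [levelEP_succ_proj_apply]
    simp only [ofSeqHomLevel, ScottHom.coe_mk, embed_succ_emb, proj_apply_succ]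

theorem monotone_ofSeqHom : Monotone ofSeqHom := by
  intro f g h
  refine le_def.2 fun n => ?_
  cases n with
  | zero =>
    exact (levelEP 0).scottContinuous_proj.monotone
      (show ofSeqHomLevel f 0 ≤ ofSeqHomLevel g 0 from fun σ =>
        le_def.1 (h fun k => embed levelEP 0 (σ k)) 0)
  | succ n => exact fun σ => le_def.1 (h fun k => embed levelEP n (σ k)) n

theorem ofSeqHom_toSeqHom (d : Dinf) : ofSeqHom (toSeqHom d) = d :=
  ext_succ fun _ => ScottHom.ext fun σ => toSeqHom_embed_apply d σ

theorem toSeqHom_ofSeqHom (f : SeqHom Dinf) : toSeqHom (ofSeqHom f) = f := by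
  ext ρ : 1
  set ρn : ℕ → ℕ → Dinf := fun n k => embed levelEP n (ρ k n)
  have hρn : Monotone ρn := fun _ _ h k => monotone_embed_apply (ρ k) h
  change ⨆ n, embed levelEP n (f (ρn n) n) = f ρ
  refine le_antisymm (iSup_le fun n => (embed_apply_le n _).trans
    (f.scottContinuous.monotone fun k => embed_apply_le n (ρ k))) ?_
  calc f ρ = ⨆ n, f (ρn n) := by
        rw [← f.scottContinuous.map_iSup_of_monotone hρn]
        congr 1
        ext k : 1
        rw [iSup_apply]
        exact (iSup_embed_apply (ρ k)).symm
    _ ≤ ⨆ n, embed levelEP n (f (ρn n) n) := iSup_le fun n => by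
        rw [← iSup_embed_apply (f (ρn n))]
        refine iSup_le fun m => ?_
        calc embed levelEP m (f (ρn n) m)
            ≤ embed levelEP m (f (ρn (max n m)) m) :=
              (gc_embed m).monotone_l (le_def.1 (f.scottContinuous.monotone
                (hρn (le_max_left n m))) m)
          _ ≤ embed levelEP (max n m) (f (ρn (max n m)) (max n m)) :=
              monotone_embed_apply _ (le_max_right n m)
          _ ≤ _ := le_iSup (fun k => embed levelEP k (f (ρn k) k)) (max n m)

def equivSeqHom : Dinf ≃o SeqHom Dinf :=
  Equiv.toOrderIso ⟨toSeqHom, ofSeqHom, ofSeqHom_toSeqHom, toSeqHom_ofSeqHom⟩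
    monotone_toSeqHom monotone_ofSeqHom

abbrev D : Type := ℕ → Dinf

def ap (d x : D) : D := fun n => toSeqHom (d n) x

def lam (f : ScottHom D D) : D :=
  fun n => ofSeqHom ⟨fun x => f x n, by fun_prop⟩

def pair (a b : D) : D := Stream'.interleave a b

def fst (d : D) : D := Stream'.even d

def snd (d : D) : D := Stream'.odd d

theorem ap_lam (f : ScottHom D D) (x : D) : ap (lam f) x = f x := by
  funext n
  simp only [ap, lam, toSeqHom_ofSeqHom, ScottHom.coe_mk]

theorem lam_ap (d : D) (h : ScottContinuous (ap d)) : lam ⟨ap d, h⟩ = d := by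
  funext n
  rw [lam, ← ofSeqHom_toSeqHom (d n)]
  rfl

theorem fst_pair (a b : D) : fst (pair a b) = a := Stream'.even_interleave a b

theorem snd_pair (a b : D) : snd (pair a b) = b :=
  (Stream'.odd_eq _).trans <|
    (congrArg Stream'.even (Stream'.tail_interleave a b)).trans (Stream'.even_interleave _ _)

theorem pair_fst_snd (d : D) : pair (fst d) (snd d) = d := Stream'.interleave_even_odd d

@[fun_prop]
theorem scottContinuous_ap {α : Type*} [CompleteLattice α] {f g : α → D}
    (hf : ScottContinuous f) (hg : ScottContinuous g) :
    ScottContinuous fun a => ap (f a) (g a) := by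
  have : ScottContinuous toSeqHom := equivSeqHom.scottContinuous
  have hap : ScottContinuous fun p : D × D => ap p.1 p.2 := .fromProd
    (fun d => scottContinuous_pi fun n => (toSeqHom (d n)).scottContinuous)
    fun x => by unfold ap; fun_prop
  exact ((hf.prodMk hg).comp hap :)

@[fun_prop]
theorem scottContinuous_lam : ScottContinuous lam := by
  have : ScottContinuous ofSeqHom := equivSeqHom.symm.scottContinuous
  refine scottContinuous_pi fun n => ScottContinuous.fun_comp ?_ this
  exact ScottHom.scottContinuous_of_apply fun x => by simp only [ScottHom.coe_mk]; fun_prop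

@[fun_prop]
theorem scottContinuous_pair {α : Type*} [CompleteLattice α] {f g : α → D}
    (hf : ScottContinuous f) (hg : ScottContinuous g) :
    ScottContinuous fun a => pair (f a) (g a) := by
  suffices hpair : ScottContinuous fun p : D × D => pair p.1 p.2 from
    ((hf.prodMk hg).comp hpair :)
  refine scottContinuous_pi fun n => ?_
  obtain ⟨k, rfl | rfl⟩ := Nat.even_or_odd' n
  · have h : (fun p : D × D => pair p.1 p.2 (2 * k)) = fun p => p.1 k :=
      funext fun p => Stream'.get_interleave_left k p.1 p.2
    rw [h]; fun_prop
  · have h : (fun p : D × D => pair p.1 p.2 (2 * k + 1)) = fun p => p.2 k :=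
      funext fun p => Stream'.get_interleave_right k p.1 p.2
    rw [h]; fun_prop

@[fun_prop]
theorem scottContinuous_fst : ScottContinuous fst :=
  scottContinuous_pi fun n => by
    have h : (fun d : D => fst d n) = fun d => d (2 * n) := funext (Stream'.get_even n)
    rw [h]; fun_prop

@[fun_prop]
theorem scottContinuous_snd : ScottContinuous snd :=
  scottContinuous_pi fun n => by
    have h : (fun d : D => snd d n) = fun d => d (2 * n + 1) := funext (Stream'.get_odd n)
    rw [h]; fun_prop

abbrev Env : Type := ℕ → D

def interp : Tm → ScottHom Env D
  | .var n => ⟨fun ρ => ρ n, by fun_prop⟩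
  | .app M N => ⟨fun ρ => ap (interp M ρ) (interp N ρ), by fun_prop⟩
  | .lam M => ⟨fun ρ => lam
      (ScottHom.curry ⟨fun p => interp M (insertIdx 0 p.2 p.1), by fun_prop⟩ ρ), by fun_prop⟩
  | .pair M N => ⟨fun ρ => pair (interp M ρ) (interp N ρ), by fun_prop⟩
  | .p1 M => ⟨fun ρ => fst (interp M ρ), by fun_prop⟩
  | .p2 M => ⟨fun ρ => snd (interp M ρ), by fun_prop⟩

@[simp]
theorem interp_var (n : ℕ) (ρ : Env) : interp (.var n) ρ = ρ n := rfl

@[simp]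
theorem interp_app (M N : Tm) (ρ : Env) : interp (.app M N) ρ = ap (interp M ρ) (interp N ρ) :=
  rfl

@[simp]
theorem interp_pair (M N : Tm) (ρ : Env) :
    interp (.pair M N) ρ = pair (interp M ρ) (interp N ρ) := rfl

@[simp]
theorem interp_p1 (M : Tm) (ρ : Env) : interp (.p1 M) ρ = fst (interp M ρ) := rfl

@[simp]
theorem interp_p2 (M : Tm) (ρ : Env) : interp (.p2 M) ρ = snd (interp M ρ) := rfl

theorem interp_lam_congr {M M' : Tm} {ρ ρ' : Env}
    (h : ∀ x, interp M (insertIdx 0 x ρ) = interp M' (insertIdx 0 x ρ')) :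
    interp (.lam M) ρ = interp (.lam M') ρ' :=
  congrArg lam (ScottHom.ext h)

theorem ap_interp_lam (M : Tm) (ρ : Env) (x : D) :
    ap (interp (.lam M) ρ) x = interp M (insertIdx 0 x ρ) :=
  ap_lam _ x

theorem interp_lift (M : Tm) (d : ℕ) (ρ : Env) :
    interp (M.lift d) ρ = interp M (eraseIdx d ρ) := by
  induction M generalizing d ρ with
  | var n => by_cases h : n < d <;> simp [Tm.lift, eraseIdx, h]
  | lam M ih => exact interp_lam_congr fun x => by rw [ih, eraseIdx_succ_insertIdx_zero]
  | _ => simp [Tm.lift, *]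

theorem interp_subst (M : Tm) (k : ℕ) (s : Tm) (ρ : Env) :
    interp (M.subst k s) ρ = interp M (insertIdx k (interp s ρ) ρ) := by
  induction M generalizing k s ρ with
  | var n =>
    simp only [Tm.subst]
    split_ifs <;> simp [insertIdx, *]
  | lam M ih =>
    refine interp_lam_congr fun x => ?_
    rw [ih, interp_lift, eraseIdx_insertIdx_self, insertIdx_succ_insertIdx_zero]
  | _ => simp [Tm.subst, *]

theorem interp_eq_of_eqSP {M N : Tm} (h : EqSP M N) : interp M = interp N := by
  induction h with
  | beta => ext ρ : 1; rw [interp_app, ap_interp_lam, interp_subst]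
  | @eta M =>
    ext ρ : 1
    calc interp (.lam (.app (M.lift 0) (.var 0))) ρ = lam ⟨ap (interp M ρ), by fun_prop⟩ :=
          congrArg lam <| ScottHom.ext fun x => by
            simp [interp_lift, eraseIdx_insertIdx_self, insertIdx]
      _ = interp M ρ := lam_ap _ _
  | pi1 => ext ρ : 1; exact fst_pair _ _
  | pi2 => ext ρ : 1; exact snd_pair _ _
  | sp => ext ρ : 1; exact pair_fst_snd _
  | refl => rfl
  | symm _ ih => exact ih.symm
  | trans _ _ ih₁ ih₂ => exact ih₁.trans ih₂
  | lam _ ih => ext ρ : 1; exact interp_lam_congr fun x => by rw [ih]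
  | _ => ext ρ : 1; simp [*]

end SPModel

/-- The theory βη-SP is consistent: distinct variables are not provably equal. -/
theorem eqSP_consistent : ∀ x y : Nat, x ≠ y → ¬ EqSP (.var x) (.var y) := by
  intro x y hxy h
  obtain ⟨a, b, hab⟩ := exists_pair_ne SPModel.D
  have hρ := congrArg (· (Function.update (fun _ => a) y b)) (SPModel.interp_eq_of_eqSP h)
  simp only [SPModel.interp_var, Function.update_self, Function.update_of_ne hxy] at hρ
  exact hab hρ
end
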